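/- arXiv:2006.06979 — 2 statements merged into one kernel-verified Lean document; each statement's English description precedes it below -/
import Mathlib

section
/- Strong-convexity L² bound: Let μ := inf_{t∈I_r} f''(t) > 0 for a twice continuously differentiable convex f on interval I_r. Let p_de be a probability density, r*, r : 𝒳 → I_r measurable functions square-integrable with respect to p_de. Then BR_f(r) − BR_f(r*) ≥ (μ/2)·‖r − r*‖²_{L²(p_de)}, where BR_f(r) := E_de[f'(r(X))r(X) − f(r(X))] − E_nu[f'(r(X))] and p_nu = r*·p_de. -/
/-!
Subtracting the risks, the terms linear in `r*` (the `p_nu`-expectations) combine with the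
`p_de`-expectations into the Bregman divergence `D_f(r*(x), r(x))`, integrated against `p_de`.
Since `f'' ≥ m`, the function `t ↦ f t - m/2 · t²` is convex, so it lies above its tangent
lines; this is exactly `D_f(s, t) ≥ m/2 · (s - t)²`, and integrating gives the bound.
-/

open MeasureTheory

/-- The Bregman divergence `D_f(x, y)`, with `f'` standing for the derivative of `f`. -/
def bregmanDiv (f f' : ℝ → ℝ) (x y : ℝ) : ℝ :=
  f x - f y - f' y * (x - y)

lemma hasDerivAt_half_mul_sq (m t : ℝ) : HasDerivAt (fun t => m / 2 * t ^ 2) (m * t) t :=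
  ((hasDerivAt_pow 2 t).const_mul (m / 2)).congr_deriv (by push_cast; ring)

lemma ConvexOn.add_mul_sub_le_of_hasDerivAt {S : Set ℝ} {g : ℝ → ℝ} {g' a b : ℝ}
    (hg : ConvexOn ℝ S g) (ha : a ∈ S) (hb : b ∈ S) (hderiv : HasDerivAt g g' a) :
    g a + g' * (b - a) ≤ g b := by
  rcases lt_trichotomy a b with hab | rfl | hab
  · have h := hg.le_slope_of_hasDerivAt ha hb hab hderiv
    rw [slope_def_field, le_div_iff₀ (sub_pos.2 hab)] at h
    linarith
  · simp
  · have h := hg.slope_le_of_hasDerivAt hb ha hab hderiv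
    rw [slope_def_field, div_le_iff₀ (sub_pos.2 hab)] at h
    linarith

lemma convexOn_sub_half_mul_sq_of_hasDerivAt2_ge {D : Set ℝ} (hD : Convex ℝ D)
    {f f' f'' : ℝ → ℝ} {m : ℝ}
    (hf : ∀ t ∈ D, HasDerivAt f (f' t) t) (hf' : ∀ t ∈ D, HasDerivAt f' (f'' t) t)
    (hm : ∀ t ∈ D, m ≤ f'' t) :
    ConvexOn ℝ D fun t => f t - m / 2 * t ^ 2 := by
  refine convexOn_of_hasDerivWithinAt2_nonneg hD (f' := fun t => f' t - m * t)
    (f'' := fun t => f'' t - m) (fun t ht => ?_) (fun t ht => ?_) (fun t ht => ?_)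
    (fun t ht => sub_nonneg.2 (hm t (interior_subset ht)))
  · exact ((hf t ht).sub (hasDerivAt_half_mul_sq m t)).continuousAt.continuousWithinAt
  · exact ((hf t (interior_subset ht)).sub (hasDerivAt_half_mul_sq m t)).hasDerivWithinAt
  · exact ((hf' t (interior_subset ht)).sub (hasDerivAt_const_mul m)).hasDerivWithinAt

lemma half_mul_sq_le_bregmanDiv {D : Set ℝ} (hD : Convex ℝ D) {f f' f'' : ℝ → ℝ} {m : ℝ}
    (hf : ∀ t ∈ D, HasDerivAt f (f' t) t) (hf' : ∀ t ∈ D, HasDerivAt f' (f'' t) t)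
    (hm : ∀ t ∈ D, m ≤ f'' t) {x y : ℝ} (hx : x ∈ D) (hy : y ∈ D) :
    m / 2 * (x - y) ^ 2 ≤ bregmanDiv f f' x y := by
  have htangent := (convexOn_sub_half_mul_sq_of_hasDerivAt2_ge hD hf hf' hm
    ).add_mul_sub_le_of_hasDerivAt hy hx ((hf y hy).sub (hasDerivAt_half_mul_sq m y))
  simp only [bregmanDiv]
  linear_combination htangent

lemma integral_bregmanDiv_eq {α : Type*} [MeasurableSpace α] {μ : Measure α}
    {f f' : ℝ → ℝ} {s r : α → ℝ}
    (hr₁ : Integrable (fun x => f' (r x) * r x - f (r x)) μ)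
    (hr₂ : Integrable (fun x => s x * f' (r x)) μ)
    (hs₁ : Integrable (fun x => f' (s x) * s x - f (s x)) μ)
    (hs₂ : Integrable (fun x => s x * f' (s x)) μ) :
    ∫ x, bregmanDiv f f' (s x) (r x) ∂μ =
      ((∫ x, (f' (r x) * r x - f (r x)) ∂μ) - ∫ x, s x * f' (r x) ∂μ) -
      ((∫ x, (f' (s x) * s x - f (s x)) ∂μ) - ∫ x, s x * f' (s x) ∂μ) := by
  rw [← integral_sub hr₁ hr₂, ← integral_sub hs₁ hs₂, ← integral_sub]
  · congr 1 with x
    simp only [bregmanDiv]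
    ring
  exacts [hr₁.sub hr₂, hs₁.sub hs₂]

theorem statement_7_general {α : Type*} [MeasurableSpace α]
    (μde : Measure α)
    (b_r B_r : ℝ)
    (f f' f'' : ℝ → ℝ)
    (hder1 : ∀ t ∈ Set.Ioo b_r B_r, HasDerivAt f (f' t) t)
    (hder2 : ∀ t ∈ Set.Ioo b_r B_r, HasDerivAt f' (f'' t) t)
    (m : ℝ) (hmle : ∀ t ∈ Set.Ioo b_r B_r, m ≤ f'' t)
    (rstar r : α → ℝ)
    (hrstar_mem : ∀ x, rstar x ∈ Set.Ioo b_r B_r) (hr_mem : ∀ x, r x ∈ Set.Ioo b_r B_r)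
    (hint1 : Integrable (fun x => f' (r x) * r x - f (r x)) μde)
    (hint2 : Integrable (fun x => rstar x * f' (r x)) μde)
    (hint3 : Integrable (fun x => f' (rstar x) * rstar x - f (rstar x)) μde)
    (hint4 : Integrable (fun x => rstar x * f' (rstar x)) μde)
    (hint5 : Integrable (fun x => (r x - rstar x) ^ 2) μde) :
    m / 2 * ∫ x, (r x - rstar x) ^ 2 ∂μde ≤
      ((∫ x, (f' (r x) * r x - f (r x)) ∂μde) - ∫ x, rstar x * f' (r x) ∂μde) -
      ((∫ x, (f' (rstar x) * rstar x - f (rstar x)) ∂μde) -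
        ∫ x, rstar x * f' (rstar x) ∂μde) := by
  have hbregman x : m / 2 * (r x - rstar x) ^ 2 ≤ bregmanDiv f f' (rstar x) (r x) := by
    rw [sub_sq_comm]
    exact half_mul_sq_le_bregmanDiv (convex_Ioo _ _) hder1 hder2 hmle (hrstar_mem x) (hr_mem x)
  have hbregman_int : Integrable (fun x => bregmanDiv f f' (rstar x) (r x)) μde := by
    refine ((hint1.sub hint2).sub (hint3.sub hint4)).congr (.of_forall fun x => ?_)
    simp only [bregmanDiv, Pi.sub_apply]
    ring
  rw [← integral_bregmanDiv_eq hint1 hint2 hint3 hint4, ← integral_const_mul]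
  exact integral_mono (hint5.const_mul _) hbregman_int hbregman

/-- Strong-convexity L² bound for the Bregman risk. Here the denominator distribution is a
probability measure `μde`, the true density ratio is `rstar` (so the numerator distribution has
density `rstar` w.r.t. `μde`), and
`BR_f(r) = E_de[f'(r) r - f(r)] - E_nu[f'(r)]` with `E_nu[g] = ∫ rstar · g dμde`.
If `f'' ≥ m > 0` on the interval `I_r = (b_r, B_r)`, then
`BR_f(r) - BR_f(r*) ≥ (m/2) ‖r - r*‖²_{L²(p_de)}`. -/
theorem statement_7 {α : Type*} [MeasurableSpace α]
    (μde : Measure α) [IsProbabilityMeasure μde]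
    (b_r B_r : ℝ) (hbB : b_r < B_r)
    (f f' f'' : ℝ → ℝ)
    (hder1 : ∀ t ∈ Set.Ioo b_r B_r, HasDerivAt f (f' t) t)
    (hder2 : ∀ t ∈ Set.Ioo b_r B_r, HasDerivAt f' (f'' t) t)
    (hcont : ContinuousOn f'' (Set.Ioo b_r B_r))
    (m : ℝ) (hm : 0 < m) (hmle : ∀ t ∈ Set.Ioo b_r B_r, m ≤ f'' t)
    (rstar r : α → ℝ) (hrstar_meas : Measurable rstar) (hr_meas : Measurable r)
    (hrstar_mem : ∀ x, rstar x ∈ Set.Ioo b_r B_r) (hr_mem : ∀ x, r x ∈ Set.Ioo b_r B_r)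
    (hrstar_one : ∫ x, rstar x ∂μde = 1)
    (hint1 : Integrable (fun x => f' (r x) * r x - f (r x)) μde)
    (hint2 : Integrable (fun x => rstar x * f' (r x)) μde)
    (hint3 : Integrable (fun x => f' (rstar x) * rstar x - f (rstar x)) μde)
    (hint4 : Integrable (fun x => rstar x * f' (rstar x)) μde)
    (hint5 : Integrable (fun x => (r x - rstar x) ^ 2) μde) :
    m / 2 * ∫ x, (r x - rstar x) ^ 2 ∂μde ≤
      ((∫ x, (f' (r x) * r x - f (r x)) ∂μde) - ∫ x, rstar x * f' (r x) ∂μde) -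
      ((∫ x, (f' (rstar x) * rstar x - f (rstar x)) ∂μde) -
        ∫ x, rstar x * f' (rstar x) ∂μde) :=
  statement_7_general μde b_r B_r f f' f'' hder1 hder2 m hmle rstar r hrstar_mem hr_mem hint1 hint2
    hint3 hint4 hint5
end

section
/- The true density ratio minimizes the Bregman risk: for any measurable r : 𝒳 → I_r, BR_f(r) ≥ BR_f(r*), where r* = p_nu/p_de, f is convex differentiable, and BR_f(r) = E_de[f'(r)r − f(r)] − E_nu[f'(r)]. -/
open MeasureTheory

lemma tangent_le {S : Set ℝ} {f : ℝ → ℝ} (hconv : ConvexOn ℝ S f)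
    {s t d : ℝ} (hs : s ∈ S) (ht : t ∈ S) (hd : HasDerivAt f d t) :
    f t + d * (s - t) ≤ f s := by
  rcases lt_trichotomy s t with h | h | h
  · have := hconv.slope_le_of_hasDerivAt hs ht h hd
    rw [slope_def_field] at this
    have hts : 0 < t - s := by linarith
    rw [div_le_iff₀ hts] at this
    linarith
  · simp [h]
  · have := hconv.le_slope_of_hasDerivAt ht hs h hd
    rw [slope_def_field] at this
    have hst : 0 < s - t := by linarith
    rw [le_div_iff₀ hst] at this
    linarith

/-- The true density ratio minimizes the Bregman risk: with `μde` the denominator distribution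
and `rstar` the true density ratio (numerator expectation `E_nu[g] = ∫ rstar · g dμde`),
for any measurable `r` taking values in the interval `I_r`,
`BR_f(r) ≥ BR_f(r*)` where `BR_f(r) = E_de[f'(r) r - f(r)] - E_nu[f'(r)]`
and `f` is convex differentiable on `I_r`. -/
theorem statement_9 {α : Type*} [MeasurableSpace α]
    (μde : Measure α) [IsProbabilityMeasure μde]
    (b_r B_r : ℝ) (hbB : b_r < B_r)
    (f f' : ℝ → ℝ)
    (hconv : ConvexOn ℝ (Set.Ioo b_r B_r) f)
    (hder : ∀ t ∈ Set.Ioo b_r B_r, HasDerivAt f (f' t) t)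
    (rstar r : α → ℝ) (hrstar_meas : Measurable rstar) (hr_meas : Measurable r)
    (hrstar_mem : ∀ x, rstar x ∈ Set.Ioo b_r B_r) (hr_mem : ∀ x, r x ∈ Set.Ioo b_r B_r)
    (hrstar_one : ∫ x, rstar x ∂μde = 1)
    (hint1 : Integrable (fun x => f' (r x) * r x - f (r x)) μde)
    (hint2 : Integrable (fun x => rstar x * f' (r x)) μde)
    (hint3 : Integrable (fun x => f' (rstar x) * rstar x - f (rstar x)) μde)
    (hint4 : Integrable (fun x => rstar x * f' (rstar x)) μde) :
    (∫ x, (f' (rstar x) * rstar x - f (rstar x)) ∂μde) -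
      (∫ x, rstar x * f' (rstar x) ∂μde) ≤
    (∫ x, (f' (r x) * r x - f (r x)) ∂μde) - ∫ x, rstar x * f' (r x) ∂μde := by
  have key : 0 ≤ ∫ x, ((f' (r x) * r x - f (r x)) - rstar x * f' (r x)
      - ((f' (rstar x) * rstar x - f (rstar x)) - rstar x * f' (rstar x))) ∂μde := by
    apply integral_nonneg
    intro x
    have h := tangent_le hconv (hrstar_mem x) (hr_mem x) (hder _ (hr_mem x))
    simp only [Pi.zero_apply]
    nlinarith [h]
  have ha : Integrable (fun x => (f' (r x) * r x - f (r x)) - rstar x * f' (r x)) μde :=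
    hint1.sub hint2
  have hb : Integrable (fun x => (f' (rstar x) * rstar x - f (rstar x)) - rstar x * f' (rstar x))
      μde := hint3.sub hint4
  rw [integral_sub ha hb, integral_sub hint1 hint2, integral_sub hint3 hint4] at key
  linarith
end
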